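/- arXiv:1904.03072 — 2 statements merged into one kernel-verified Lean document; each statement's English description precedes it below -/
import Mathlib

section
/- For any b ∈ ℝ, δ > 0, and c ≥ 0, there exists a constant C (depending on b and δ) such that for all τ > 0, ∫₀^τ e^{b(τ-s)} e^{-δ(e^τ - e^s)} e^{-cs} ds ≤ C e^{-(c+1)τ}. -/
/-!
Writing `t = τ - s`, the damping exponent satisfies `e^τ - e^s = e^s (e^t - 1) ≥ t² / 2`, so half of
it absorbs any linear growth `β t` at the cost of the constant `e^{β²/δ}`. The other half is kept:
`e^s e^{-(δ/2)(e^τ - e^s)}` has the explicit antiderivative `(2/δ) e^{-(δ/2)(e^τ - e^s)}`, so its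
integral is at most `2/δ`. Taking `β = b + c + 1` trades `e^{b(τ-s)} e^{-cs}` for
`e^{-(c+1)τ} e^s` in this way.
-/

open MeasureTheory Real

lemma mul_sub_mul_exp_sub_one_le (β : ℝ) {δ t : ℝ} (hδ : 0 < δ) (ht : 0 ≤ t) :
    β * t - δ / 2 * (exp t - 1) ≤ β ^ 2 / δ := by
  have hquad : t ^ 2 / 2 ≤ exp t - 1 := by nlinarith [quadratic_le_exp_of_nonneg ht]
  rw [le_div_iff₀ hδ]
  nlinarith [sq_nonneg (δ * t / 2 - β), mul_le_mul_of_nonneg_left hquad (sq_nonneg δ)]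

lemma exp_sub_sub_one_le_exp_sub_exp {s τ : ℝ} (hs : 0 ≤ s) (hsτ : s ≤ τ) :
    exp (τ - s) - 1 ≤ exp τ - exp s := by
  have hfactor : exp τ - exp s = exp s * (exp (τ - s) - 1) := by
    rw [mul_sub, ← exp_add, add_sub_cancel, mul_one]
  rw [hfactor]
  exact le_mul_of_one_le_left (by linarith [add_one_le_exp (τ - s)]) (one_le_exp hs)

lemma integrand_le_majorant (b c : ℝ) {δ s τ : ℝ} (hδ : 0 < δ) (hs : 0 ≤ s) (hsτ : s ≤ τ) :
    exp (b * (τ - s)) * exp (-δ * (exp τ - exp s)) * exp (-c * s) ≤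
      exp ((b + c + 1) ^ 2 / δ + -(c + 1) * τ) * (exp s * exp (-(δ / 2) * (exp τ - exp s))) := by
  simp only [← exp_add, exp_le_exp]
  have hβ := mul_sub_mul_exp_sub_one_le (b + c + 1) hδ (sub_nonneg.2 hsτ)
  have hdamp := exp_sub_sub_one_le_exp_sub_exp hs hsτ
  nlinarith

lemma hasDerivAt_exp_neg_mul_exp_sub_exp (a τ s : ℝ) :
    HasDerivAt (fun u => exp (-a * (exp τ - exp u)))
      (a * (exp s * exp (-a * (exp τ - exp s)))) s := by
  have hinner : HasDerivAt (fun u => -a * (exp τ - exp u)) (a * exp s) s := by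
    simpa using ((hasDerivAt_exp s).const_sub (exp τ)).const_mul (-a)
  convert hinner.exp using 1
  ring

lemma setIntegral_exp_mul_exp_neg_mul_exp_sub_exp_le {a τ : ℝ} (ha : 0 < a) (hτ : 0 ≤ τ) :
    ∫ s in Set.Ioo (0 : ℝ) τ, exp s * exp (-a * (exp τ - exp s)) ≤ 1 / a := by
  have hderiv : ∀ s ∈ Set.uIcc (0 : ℝ) τ,
      HasDerivAt (fun u => exp (-a * (exp τ - exp u)) / a)
        (exp s * exp (-a * (exp τ - exp s))) s := fun s _ => by
    simpa only [mul_div_cancel_left₀ _ ha.ne'] using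
      (hasDerivAt_exp_neg_mul_exp_sub_exp a τ s).div_const a
  have hcont : Continuous fun s => exp s * exp (-a * (exp τ - exp s)) := by fun_prop
  rw [← integral_Ioc_eq_integral_Ioo, ← intervalIntegral.integral_of_le hτ,
    intervalIntegral.integral_eq_sub_of_hasDerivAt hderiv (hcont.intervalIntegrable _ _),
    sub_self, mul_zero, exp_zero]
  have : 0 ≤ exp (-a * (exp τ - 1)) / a := by positivity
  linarith

theorem stmt1_general (b : ℝ) (δ : ℝ) (hδ : 0 < δ) (c : ℝ) :
    ∃ C : ℝ, ∀ τ : ℝ, 0 < τ →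
      ∫ s in Set.Ioo (0:ℝ) τ,
          Real.exp (b * (τ - s)) * Real.exp (-δ * (Real.exp τ - Real.exp s)) * Real.exp (-c * s)
        ≤ C * Real.exp (-(c + 1) * τ) := by
  refine ⟨exp ((b + c + 1) ^ 2 / δ) * (1 / (δ / 2)), fun τ hτ => ?_⟩
  calc ∫ s in Set.Ioo 0 τ, exp (b * (τ - s)) * exp (-δ * (exp τ - exp s)) * exp (-c * s)
      ≤ ∫ s in Set.Ioo 0 τ, exp ((b + c + 1) ^ 2 / δ + -(c + 1) * τ) *
          (exp s * exp (-(δ / 2) * (exp τ - exp s))) :=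
        setIntegral_mono_on
          ((Continuous.integrableOn_Icc (by fun_prop)).mono_set Set.Ioo_subset_Icc_self)
          ((Continuous.integrableOn_Icc (by fun_prop)).mono_set Set.Ioo_subset_Icc_self)
          measurableSet_Ioo fun s hs => integrand_le_majorant b c hδ hs.1.le hs.2.le
    _ ≤ exp ((b + c + 1) ^ 2 / δ + -(c + 1) * τ) * (1 / (δ / 2)) := by
        rw [integral_const_mul]
        gcongr
        exact setIntegral_exp_mul_exp_neg_mul_exp_sub_exp_le (half_pos hδ) hτ.le
    _ = exp ((b + c + 1) ^ 2 / δ) * (1 / (δ / 2)) * exp (-(c + 1) * τ) := by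
        rw [exp_add]; ring

theorem stmt1 (b : ℝ) (δ : ℝ) (hδ : 0 < δ) (c : ℝ) (hc : 0 ≤ c) :
    ∃ C : ℝ, ∀ τ : ℝ, 0 < τ →
      ∫ s in Set.Ioo (0:ℝ) τ,
          Real.exp (b * (τ - s)) * Real.exp (-δ * (Real.exp τ - Real.exp s)) * Real.exp (-c * s)
        ≤ C * Real.exp (-(c + 1) * τ) :=
  stmt1_general b δ hδ c
end

section
/- Let W : ℝ → ℝ be bounded, c ∈ ℝ, δ₁ > 0. There exist C > 0 and μ₀ > 0 such that for all |μ| ≥ μ₀ and all f ∈ H²(ℝ), g ∈ L²(ℝ) with f'' + cf' + Wf + δ₁ f + iμ f = g, one has ‖f‖_{H¹} ≤ C ‖g‖_{L²}. In particular, the resolvent (L₁ + δ₁ + iμ)^{-1} (L₁ = ∂²_z + c∂_z + W) is bounded from L² to H¹, uniformly for |μ| ≥ μ₀. -/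
/-
Pair the equation with `conj f` and integrate. Integration by parts turns `∫ f'' f̄` into
`-‖f'‖²` and makes `∫ f' f̄` purely imaginary, while `∫ W |f|²` is real and at most `K ‖f‖²`.
By Cauchy–Schwarz the imaginary part gives `|μ| ‖f‖² ≤ (|c| ‖f'‖ + ‖g‖) ‖f‖` and the real
part gives `‖f'‖² ≤ (K + |δ₁|) ‖f‖² + ‖g‖ ‖f‖`. Adding the two and absorbing the cross terms
by Young's inequality, `|μ| ≥ K + |δ₁| + c²/2 + 1` forces `‖f‖² + ‖f'‖² ≤ 4 ‖g‖²`.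
-/

open MeasureTheory Complex
open scoped ComplexConjugate

section L2Pairing

variable {α 𝕜 : Type*} [MeasurableSpace α] {μ : Measure α} [RCLike 𝕜] {u v : α → 𝕜}

theorem integrable_mul_conj (hu : MemLp u 2 μ) (hv : MemLp v 2 μ) :
    Integrable (fun x => u x * conj (v x)) μ :=
  hu.integrable_mul hv.star

theorem norm_integral_mul_conj_le (hu : MemLp u 2 μ) (hv : MemLp v 2 μ) :
    ‖∫ x, u x * conj (v x) ∂μ‖ ≤ √(∫ x, ‖u x‖ ^ 2 ∂μ) * √(∫ x, ‖v x‖ ^ 2 ∂μ) := by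
  have holder := integral_mul_norm_le_Lp_mul_Lq Real.HolderConjugate.two_two
    (by simpa using hu) (by simpa using hv)
  simp only [Real.rpow_two, ← Real.sqrt_eq_rpow] at holder
  calc ‖∫ x, u x * conj (v x) ∂μ‖ ≤ ∫ x, ‖u x * conj (v x)‖ ∂μ := norm_integral_le_integral_norm _
    _ = ∫ x, ‖u x‖ * ‖v x‖ ∂μ := by simp only [norm_mul, RCLike.norm_conj]
    _ ≤ _ := holder

theorem integral_mul_conj_self (f : α → ℂ) :
    ∫ x, f x * conj (f x) ∂μ = ((∫ x, ‖f x‖ ^ 2 ∂μ : ℝ) : ℂ) := by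
  simp_rw [mul_conj, normSq_eq_norm_sq]
  exact integral_ofReal

end L2Pairing

theorem integral_deriv_mul_conj {u v : ℝ → ℂ} (hu : Differentiable ℝ u) (hv : Differentiable ℝ v)
    (hu2 : MemLp u 2 volume) (hu'2 : MemLp (deriv u) 2 volume)
    (hv2 : MemLp v 2 volume) (hv'2 : MemLp (deriv v) 2 volume) :
    ∫ x, deriv u x * conj (v x) = -∫ x, u x * conj (deriv v x) := by
  have hconj : ∀ x, HasDerivAt (fun y => conj (v y)) (conj (deriv v x)) x :=
    fun x => (hv x).hasDerivAt.star
  exact neg_eq_iff_eq_neg.mp (integral_mul_deriv_eq_deriv_mul_of_integrable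
    (fun x _ => (hu x).hasDerivAt) (fun x _ => hconj x) (integrable_mul_conj hu2 hv'2)
    (integrable_mul_conj hu'2 hv2) (integrable_mul_conj hu2 hv2)).symm

theorem re_integral_deriv_mul_conj_self {f : ℝ → ℂ} (hf : Differentiable ℝ f)
    (hf2 : MemLp f 2 volume) (hf'2 : MemLp (deriv f) 2 volume) :
    (∫ x, deriv f x * conj (f x)).re = 0 := by
  have ibp := integral_deriv_mul_conj hf hf hf2 hf'2 hf2 hf'2
  have hswap : ∫ x, f x * conj (deriv f x) = conj (∫ x, deriv f x * conj (f x)) := by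
    rw [← integral_conj]; simp only [map_mul, conj_conj, mul_comm]
  rw [hswap] at ibp
  have := congrArg re ibp
  rw [neg_re, conj_re] at this
  linarith

theorem integral_deriv_deriv_mul_conj {f : ℝ → ℂ} (hf : ContDiff ℝ 2 f)
    (hf2 : MemLp f 2 volume) (hf'2 : MemLp (deriv f) 2 volume)
    (hf''2 : MemLp (deriv (deriv f)) 2 volume) :
    ∫ x, deriv (deriv f) x * conj (f x) = -((∫ x, ‖deriv f x‖ ^ 2 : ℝ) : ℂ) := by
  have hf' : Differentiable ℝ (deriv f) :=
    (hf.iterate_deriv' 1 1).differentiable one_ne_zero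
  rw [integral_deriv_mul_conj hf' (hf.differentiable two_ne_zero) hf'2 hf''2 hf2 hf'2,
    integral_mul_conj_self]

theorem integral_mul_le_of_abs_le {α : Type*} [Nonempty α] [MeasurableSpace α]
    {μ : Measure α} {W φ : α → ℝ} {K : ℝ} (hW : ∀ x, |W x| ≤ K) (hφ : Integrable φ μ)
    (hφ0 : 0 ≤ φ) :
    ∫ x, W x * φ x ∂μ ≤ K * ∫ x, φ x ∂μ := by
  by_cases hWφ : Integrable (fun x => W x * φ x) μ
  · rw [← integral_const_mul]
    exact integral_mono hWφ (hφ.const_mul K) fun x =>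
      mul_le_mul_of_nonneg_right ((le_abs_self _).trans (hW x)) (hφ0 x)
  · -- junk value: the non-integrable `W * φ` has integral `0`
    rw [integral_undef hWφ]
    exact mul_nonneg ((abs_nonneg _).trans (hW (Classical.arbitrary α))) (integral_nonneg hφ0)

theorem ofReal_integral_mul_norm_sq_eq {W : ℝ → ℝ} {c δ μ : ℝ} {f g : ℝ → ℂ}
    (hf : ContDiff ℝ 2 f) (hf2 : MemLp f 2 volume) (hf'2 : MemLp (deriv f) 2 volume)
    (hf''2 : MemLp (deriv (deriv f)) 2 volume) (hg2 : MemLp g 2 volume)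
    (heq : ∀ x, deriv (deriv f) x + (c : ℂ) * deriv f x + (W x : ℂ) * f x + (δ : ℂ) * f x
      + I * (μ : ℂ) * f x = g x) :
    ((∫ x, W x * ‖f x‖ ^ 2 : ℝ) : ℂ) = (∫ x, g x * conj (f x))
      + ((∫ x, ‖deriv f x‖ ^ 2 : ℝ) : ℂ) - c * (∫ x, deriv f x * conj (f x))
      - (δ + I * μ) * ((∫ x, ‖f x‖ ^ 2 : ℝ) : ℂ) := by
  have hpoint : ∀ x, ((W x * ‖f x‖ ^ 2 : ℝ) : ℂ) = g x * conj (f x)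
      - deriv (deriv f) x * conj (f x) - c * (deriv f x * conj (f x))
      - (δ + I * μ) * (f x * conj (f x)) := fun x => by
    rw [ofReal_mul, ofReal_pow, ← mul_conj']
    linear_combination (heq x) * conj (f x)
  have hgf := integrable_mul_conj hg2 hf2
  have hf''f := integrable_mul_conj hf''2 hf2
  have hf'f := (integrable_mul_conj hf'2 hf2).const_mul (c : ℂ)
  calc ((∫ x, W x * ‖f x‖ ^ 2 : ℝ) : ℂ) = ∫ x, ((W x * ‖f x‖ ^ 2 : ℝ) : ℂ) :=
        integral_ofReal.symm
    _ = _ := by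
      rw [integral_congr_ae (Filter.Eventually.of_forall hpoint), integral_sub, integral_sub,
        integral_sub, integral_const_mul, integral_const_mul,
        integral_deriv_deriv_mul_conj hf hf2 hf'2 hf''2, integral_mul_conj_self]
      · ring
      exacts [hgf, hf''f, hgf.sub hf''f, hf'f, (hgf.sub hf''f).sub hf'f,
        (integrable_mul_conj hf2 hf2).const_mul _]

theorem energy_estimates {W : ℝ → ℝ} {K c δ μ : ℝ} {f g : ℝ → ℂ} (hW : ∀ x, |W x| ≤ K)
    (hf : ContDiff ℝ 2 f) (hf2 : MemLp f 2 volume) (hf'2 : MemLp (deriv f) 2 volume)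
    (hf''2 : MemLp (deriv (deriv f)) 2 volume) (hg2 : MemLp g 2 volume)
    (heq : ∀ x, deriv (deriv f) x + (c : ℂ) * deriv f x + (W x : ℂ) * f x + (δ : ℂ) * f x
      + I * (μ : ℂ) * f x = g x) :
    |μ| * (∫ x, ‖f x‖ ^ 2) ≤ (|c| * √(∫ x, ‖deriv f x‖ ^ 2) + √(∫ x, ‖g x‖ ^ 2))
        * √(∫ x, ‖f x‖ ^ 2) ∧
      ∫ x, ‖deriv f x‖ ^ 2 ≤ (K + |δ|) * (∫ x, ‖f x‖ ^ 2)
        + √(∫ x, ‖g x‖ ^ 2) * √(∫ x, ‖f x‖ ^ 2) := by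
  have hid := ofReal_integral_mul_norm_sq_eq hf hf2 hf'2 hf''2 hg2 heq
  have hP := norm_integral_mul_conj_le hg2 hf2
  have hQ := norm_integral_mul_conj_le hf'2 hf2
  have hQre := re_integral_deriv_mul_conj_self (hf.differentiable two_ne_zero) hf2 hf'2
  have hr := integral_mul_le_of_abs_le hW ((memLp_two_iff_integrable_sq_norm hf2.1).1 hf2)
    (fun x => sq_nonneg ‖f x‖)
  set P := ∫ x, g x * conj (f x)
  set Q := ∫ x, deriv f x * conj (f x)
  set a := ∫ x, ‖f x‖ ^ 2
  have ha : 0 ≤ a := integral_nonneg fun x => sq_nonneg _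
  have him := congrArg im hid
  have hre := congrArg re hid
  simp only [ofReal_im, ofReal_re, sub_im, add_im, mul_im, sub_re, add_re, mul_re, I_re, I_im,
    hQre] at him hre
  constructor
  · calc |μ| * a = |P.im - c * Q.im| := by
          rw [← abs_of_nonneg ha, ← abs_mul]; congr 1; linarith
      _ ≤ |P.im| + |c| * |Q.im| := by rw [← abs_mul]; exact abs_sub _ _
      _ ≤ ‖P‖ + |c| * ‖Q‖ := by gcongr <;> exact abs_im_le_norm _
      _ ≤ _ := by nlinarith [abs_nonneg c]
  · nlinarith [abs_re_le_norm P, neg_abs_le P.re, le_abs_self δ]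

theorem sq_add_sq_le_of_energy {A L M s t u : ℝ} (hM : L + A ^ 2 / 2 + 1 ≤ M)
    (h1 : M * s ^ 2 ≤ (A * t + u) * s) (h2 : t ^ 2 ≤ L * s ^ 2 + u * s) :
    s ^ 2 + t ^ 2 ≤ 4 * u ^ 2 := by
  -- `A t s ≤ t²/2 + A² s²/2` and `2 u s ≤ s²/2 + 2 u²`
  nlinarith [mul_le_mul_of_nonneg_right hM (sq_nonneg s), sq_nonneg (t - A * s),
    sq_nonneg (s - 2 * u)]

theorem stmt14_general (W : ℝ → ℝ) (K : ℝ) (hWbdd : ∀ x, |W x| ≤ K)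
    (c δ₁ : ℝ) :
    ∃ C > 0, ∃ μ₀ > 0, ∀ μ : ℝ, μ₀ ≤ |μ| →
      ∀ f g : ℝ → ℂ,
        ContDiff ℝ 2 f →
        MemLp f 2 volume →
        MemLp (deriv f) 2 volume →
        MemLp (deriv (deriv f)) 2 volume →
        MemLp g 2 volume →
        (∀ x : ℝ,
          deriv (deriv f) x + (c : ℂ) * deriv f x + (W x : ℂ) * f x + (δ₁ : ℂ) * f x
            + Complex.I * (μ : ℂ) * f x = g x) →
        Real.sqrt ((∫ x : ℝ, ‖f x‖ ^ 2) + ∫ x : ℝ, ‖deriv f x‖ ^ 2)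
          ≤ C * Real.sqrt (∫ x : ℝ, ‖g x‖ ^ 2) := by
  have hK : 0 ≤ K := (abs_nonneg _).trans (hWbdd 0)
  refine ⟨2, two_pos, K + |δ₁| + c ^ 2 / 2 + 1, by positivity, ?_⟩
  intro μ hμ f g hf hf2 hf'2 hf''2 hg2 heq
  obtain ⟨hμa, hb⟩ := energy_estimates hWbdd hf hf2 hf'2 hf''2 hg2 heq
  have ha : 0 ≤ ∫ x, ‖f x‖ ^ 2 := integral_nonneg fun x => sq_nonneg _
  have hb0 : 0 ≤ ∫ x, ‖deriv f x‖ ^ 2 := integral_nonneg fun x => sq_nonneg _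
  have hs := Real.sq_sqrt ha
  have ht := Real.sq_sqrt hb0
  have hsum := sq_add_sq_le_of_energy (A := |c|) (L := K + |δ₁|) (M := |μ|)
    (s := √(∫ x, ‖f x‖ ^ 2)) (t := √(∫ x, ‖deriv f x‖ ^ 2)) (u := √(∫ x, ‖g x‖ ^ 2))
    (by rwa [sq_abs]) (by rwa [hs]) (by rwa [hs, ht])
  rw [hs, ht] at hsum
  exact (Real.sqrt_le_left (by positivity)).mpr (by rw [mul_pow]; linarith)

theorem stmt14 (W : ℝ → ℝ) (hWmeas : Measurable W) (K : ℝ) (hWbdd : ∀ x, |W x| ≤ K)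
    (c δ₁ : ℝ) (hδ₁ : 0 < δ₁) :
    ∃ C > 0, ∃ μ₀ > 0, ∀ μ : ℝ, μ₀ ≤ |μ| →
      ∀ f g : ℝ → ℂ,
        ContDiff ℝ 2 f →
        MemLp f 2 volume →
        MemLp (deriv f) 2 volume →
        MemLp (deriv (deriv f)) 2 volume →
        MemLp g 2 volume →
        (∀ x : ℝ,
          deriv (deriv f) x + (c : ℂ) * deriv f x + (W x : ℂ) * f x + (δ₁ : ℂ) * f x
            + Complex.I * (μ : ℂ) * f x = g x) →
        Real.sqrt ((∫ x : ℝ, ‖f x‖ ^ 2) + ∫ x : ℝ, ‖deriv f x‖ ^ 2)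
          ≤ C * Real.sqrt (∫ x : ℝ, ‖g x‖ ^ 2) :=
  stmt14_general W K hWbdd c δ₁
end
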